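/- If there exists K̄ < 0 such that K̄ > T(K̄), then the equation K = T(K) has at least two strictly negative solutions, where T(K) = Σ_{ℓ=1}^k a_ℓ ω_ℓ tanh(β(a_ℓ K + h)) with h > 0. -/
import Mathlib


open Real Finset

/-- The fixed-point map `T_{β,h,𝒫}`. -/
noncomputable def T (k : ℕ) (a ω : Fin k → ℝ) (β h K : ℝ) : ℝ :=
  ∑ ℓ, a ℓ * ω ℓ * Real.tanh (β * (a ℓ * K + h))

lemma myTanhCont : Continuous Real.tanh := by
  have : Continuous (fun x => Real.sinh x / Real.cosh x) :=
    Real.continuous_sinh.div Real.continuous_cosh (fun x => (Real.cosh_pos x).ne')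
  exact this.congr fun x => (Real.tanh_eq_sinh_div_cosh x).symm

lemma myTanhPos {x : ℝ} (hx : 0 < x) : 0 < Real.tanh x := by
  rw [Real.tanh_eq_sinh_div_cosh]
  exact div_pos (Real.sinh_pos_iff.mpr hx) (Real.cosh_pos x)

lemma myNegOneLtTanh (x : ℝ) : -1 < Real.tanh x := by
  rw [Real.tanh_eq_sinh_div_cosh, lt_div_iff₀ (Real.cosh_pos x)]
  nlinarith [Real.cosh_add_sinh x, Real.exp_pos x]

theorem stmt_3 (k : ℕ) (a ω : Fin k → ℝ)
    (ha : ∀ ℓ, 0 < a ℓ)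
    (hω : ∀ ℓ, ω ℓ ∈ Set.Ioo (0:ℝ) 1) (hωsum : ∑ ℓ, ω ℓ = 1)
    (β h : ℝ) (hβ : 0 < β) (hh : 0 < h)
    (hKb : ∃ Kb : ℝ, Kb < 0 ∧ T k a ω β h Kb < Kb) :
    ∃ K₁ K₂ : ℝ, K₁ < 0 ∧ K₂ < 0 ∧ K₁ ≠ K₂ ∧
      K₁ = T k a ω β h K₁ ∧ K₂ = T k a ω β h K₂ := by
  obtain ⟨Kb, hKb0, hTKb⟩ := hKb
  -- k is positive
  have hk : 0 < k := by
    by_contra hk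
    push_neg at hk
    interval_cases k
    simp at hωsum
  -- f K = T K - K
  set f : ℝ → ℝ := fun K => T k a ω β h K - K with hf
  have hcont : Continuous f := by
    apply Continuous.sub _ continuous_id
    unfold T
    exact continuous_finset_sum _ fun ℓ _ => by
      exact continuous_const.mul (myTanhCont.comp (by continuity))
  -- f 0 > 0
  have hf0 : 0 < f 0 := by
    simp only [hf, T, sub_zero]
    apply Finset.sum_pos
    · intro ℓ _
      have := (hω ℓ).1
      have ht : 0 < Real.tanh (β * (a ℓ * 0 + h)) := myTanhPos (by nlinarith [ha ℓ])
      exact mul_pos (mul_pos (ha ℓ) this) ht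
    · exact Finset.univ_nonempty_iff.mpr (Fin.pos_iff_nonempty.mp hk)
  -- lower bound: T K ≥ -S
  set S : ℝ := ∑ ℓ, a ℓ * ω ℓ with hS
  have hTlb : ∀ K, -S ≤ T k a ω β h K := by
    intro K
    rw [hS, ← Finset.sum_neg_distrib]
    apply Finset.sum_le_sum
    intro ℓ _
    have h1 : -1 ≤ Real.tanh (β * (a ℓ * K + h)) := le_of_lt (myNegOneLtTanh _)
    have haω : 0 < a ℓ * ω ℓ := mul_pos (ha ℓ) (hω ℓ).1
    nlinarith
  set M : ℝ := min Kb (-S - 1) with hM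
  have hfM : 0 < f M := by
    have h1 : M ≤ -S - 1 := min_le_right _ _
    have := hTlb M
    simp only [hf]
    linarith
  have hMKb : M ≤ Kb := min_le_left _ _
  have hfKb : f Kb < 0 := by simp only [hf]; linarith
  -- root in [M, Kb]
  have h1 := intermediate_value_Icc' hMKb hcont.continuousOn
  have h2 := intermediate_value_Icc (le_of_lt hKb0) hcont.continuousOn
  obtain ⟨K₁, hK₁mem, hK₁⟩ := h1 ⟨le_of_lt hfKb, le_of_lt hfM⟩
  obtain ⟨K₂, hK₂mem, hK₂⟩ := h2 ⟨le_of_lt hfKb, le_of_lt hf0⟩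
  have hK₁ne : K₁ ≠ Kb := fun e => by rw [e] at hK₁; linarith [hK₁, hfKb]
  have hK₂ne : K₂ ≠ Kb := fun e => by rw [e] at hK₂; linarith [hK₂, hfKb]
  have hK₂ne0 : K₂ ≠ 0 := fun e => by rw [e] at hK₂; linarith [hK₂, hf0]
  refine ⟨K₁, K₂, ?_, ?_, ?_, ?_, ?_⟩
  · exact lt_of_le_of_lt hK₁mem.2 hKb0
  · exact lt_of_le_of_ne hK₂mem.2 hK₂ne0
  · have : K₁ < Kb := lt_of_le_of_ne hK₁mem.2 hK₁ne
    exact ne_of_lt (lt_of_lt_of_le this hK₂mem.1)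
  · simp only [hf] at hK₁; linarith
  · simp only [hf] at hK₂; linarith
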